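/- arXiv:hep-th/9308132 — 2 statements merged into one kernel-verified Lean document; each statement's English description precedes it below -/
import Mathlib

section
/- For every 0 ≤ k ≤ n, the Grassmann Fourier transform satisfies 𝓕(ψ^1 ∧ … ∧ ψ^k) = i^{n² − k²} ψ̄_{k+1} ∧ … ∧ ψ̄_n (for k = n the right-hand side is i^0 · 1 = 1). -/
/-!
The elements `ψ̄_j ψ^j` are even, hence central, and square to zero, so the exponential series
factors as `e^{i ψ̄_j ψ^j} = ∏_j (1 + i ψ̄_j ψ^j)`. Multiplying by `ψ^1 ⋯ ψ^k` turns the factors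
with `j ≤ k` into `1`. Expanding the remaining product over subsets `S ⊆ {k+1, …, n}`, a proper
subset contributes an element of `ψ`-degree `k + |S| < n`, which the Berezin integral kills. The
full subset contributes `i^{n-k} (-1)^{k + (k+1) + ⋯ + (n-1)} ψ̄_{k+1} ⋯ ψ̄_n ψ^1 ⋯ ψ^n`, and
`i^{n-k} (-1)^{k + ⋯ + (n-1)} = i^{n² - k²}`.
-/

open Finset

noncomputable section

/-- `Λ(V* ⊕ V)`, a model of the ℤ₂-graded tensor product `Λ(V*) ⊗ Λ(V)`. -/
abbrev Egr (n : ℕ) := ExteriorAlgebra ℂ ((Fin n → ℂ) × (Fin n → ℂ))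

/-- The generators `ψ^a` of the `Λ(V)` factor. -/
def psv (n : ℕ) (a : Fin n) : Egr n := ExteriorAlgebra.ι ℂ (0, Pi.single a 1)

/-- The generators `ψ̄_a` of the `Λ(V*)` factor. -/
def psb (n : ℕ) (a : Fin n) : Egr n := ExteriorAlgebra.ι ℂ (Pi.single a 1, 0)

/-- The top monomial `ψ^1 ∧ … ∧ ψ^n`. -/
def psvTop (n : ℕ) : Egr n := ((List.finRange n).map (psv n)).prod

/-- The subalgebra `Λ(V*) ⊆ Λ(V* ⊕ V)`. -/
def AlgD (n : ℕ) : Subalgebra ℂ (Egr n) := Algebra.adjoin ℂ (Set.range (psb n))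

/-- The subspace `Λ¹(V) ⊆ Λ(V* ⊕ V)`; `(PV n) ^ k` is `Λ^k(V)`. -/
def PV (n : ℕ) : Submodule ℂ (Egr n) := Submodule.span ℂ (Set.range (psv n))

/-- The Fourier kernel `e^{i ψ̄_j ⊗ ψ^j}`; the series terminates at the n-th power. -/
def fourierKernel (n : ℕ) : Egr n :=
  ∑ m ∈ range (n + 1),
    ((Nat.factorial m : ℂ))⁻¹ • (Complex.I • ∑ j, psb n j * psv n j) ^ m

/-- `ψ^1 ∧ … ∧ ψ^k` (the first `k` generators of `Λ(V)`, in increasing order). -/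
def lowMon (n k : ℕ) : Egr n :=
  (((List.finRange n).filter fun a : Fin n => decide ((a : ℕ) < k)).map (psv n)).prod

/-- `ψ̄_{k+1} ∧ … ∧ ψ̄_n` (the last `n − k` generators of `Λ(V*)`). -/
def highBarMon (n k : ℕ) : Egr n :=
  (((List.finRange n).filter fun a : Fin n => decide (k ≤ (a : ℕ))).map (psb n)).prod

theorem Fin.card_filter_le_val {n : ℕ} (k : ℕ) :
    #({i : Fin n | k ≤ (i : ℕ)} : Finset (Fin n)) = n - k := by
  have h := card_filter_add_card_filter_not (s := univ) fun i : Fin n => (i : ℕ) < k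
  simp only [Fin.card_filter_val_lt, card_univ, Fintype.card_fin, not_lt] at h
  omega

theorem Finset.sum_pow_card_add_one_eq_zero {ι A : Type*} [CommSemiring A] (s : Finset ι)
    {x : ι → A} (hx : ∀ i ∈ s, x i ^ 2 = 0) : (∑ i ∈ s, x i) ^ (#s + 1) = 0 := by
  classical
  induction s using Finset.induction_on with
  | empty => simp
  | insert a s ha ih =>
    rw [sum_insert ha, card_insert_of_notMem ha]
    exact (Commute.all _ _).add_pow_eq_zero_of_add_le_succ_of_pow_eq_zero
      (hx a (mem_insert_self a s)) (ih fun i hi => hx i (mem_insert_of_mem hi)) (by omega)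

theorem IsNilpotent.exp_sum_of_sq_eq_zero {ι A : Type*} [CommRing A] [Module ℚ A]
    (s : Finset ι) {x : ι → A} (hx : ∀ i ∈ s, x i ^ 2 = 0) :
    exp (∑ i ∈ s, x i) = ∏ i ∈ s, (1 + x i) := by
  classical
  induction s using Finset.induction_on with
  | empty => simp [exp_zero]
  | insert a s ha ih =>
    have hs : ∀ i ∈ s, x i ^ 2 = 0 := fun i hi => hx i (mem_insert_of_mem hi)
    have ha2 : x a ^ 2 = 0 := hx a (mem_insert_self a s)
    rw [sum_insert ha, prod_insert ha, exp_add_of_commute (Commute.all _ _) ⟨2, ha2⟩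
      ⟨_, s.sum_pow_card_add_one_eq_zero hs⟩, ih hs, exp_eq_sum ha2]
    simp [sum_range_succ]

namespace ExteriorAlgebra

variable {R M : Type*} [CommRing R] [AddCommGroup M] [Module R M]

theorem ι_mul_ι_anticomm (u v : M) : ι R u * ι R v = -(ι R v * ι R u) :=
  eq_neg_of_add_eq_zero_left (ι_add_mul_swap u v)

theorem ι_mul_ι_mem_center (u v : M) :
    ι R u * ι R v ∈ Subalgebra.center R (ExteriorAlgebra R M) := by
  refine Subalgebra.mem_center_iff.mpr fun x => ?_
  induction x using ExteriorAlgebra.induction with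
  | algebraMap r => rw [← Algebra.commutes]
  | ι w =>
    rw [← mul_assoc, ι_mul_ι_anticomm w, neg_mul, mul_assoc, ι_mul_ι_anticomm w, mul_neg, neg_neg,
      ← mul_assoc]
  | mul x y hx hy => rw [mul_assoc, hy, ← mul_assoc, hx, mul_assoc]
  | add x y hx hy => rw [add_mul, hx, hy, mul_add]

theorem ι_mul_ι_sq (u v : M) : (ι R u * ι R v) ^ 2 = 0 := by
  rw [sq, mul_assoc, ← mul_assoc (ι R v), ι_mul_ι_anticomm v, neg_mul, mul_neg, ← mul_assoc,
    ← mul_assoc, ι_sq_zero, zero_mul, zero_mul, neg_zero]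

end ExteriorAlgebra

section

variable {n : ℕ}

def psbMulPsv (n : ℕ) (j : Fin n) : Subalgebra.center ℂ (Egr n) :=
  ⟨psb n j * psv n j, ExteriorAlgebra.ι_mul_ι_mem_center _ _⟩

@[simp]
theorem coe_psbMulPsv (j : Fin n) : (psbMulPsv n j : Egr n) = psb n j * psv n j :=
  rfl

theorem fourierKernel_eq_prod :
    fourierKernel n = ↑(∏ j, (1 + Complex.I • psbMulPsv n j)) := by
  have hsq : ∀ j ∈ (univ : Finset (Fin n)), (Complex.I • psbMulPsv n j) ^ 2 = 0 := fun j _ => by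
    rw [smul_pow, show psbMulPsv n j ^ 2 = 0 from Subtype.ext (ExteriorAlgebra.ι_mul_ι_sq _ _),
      smul_zero]
  have hnil := univ.sum_pow_card_add_one_eq_zero hsq
  rw [card_univ, Fintype.card_fin] at hnil
  have hexp := (IsNilpotent.exp_eq_sum hnil).symm.trans (IsNilpotent.exp_sum_of_sq_eq_zero _ hsq)
  rw [← hexp, fourierKernel]
  push_cast
  refine sum_congr rfl fun m _ => ?_
  -- `IsNilpotent.exp` has `ℚ`-coefficients
  rw [← algebraMap_smul ℂ ((m.factorial : ℚ)⁻¹)]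
  simp [Finset.smul_sum]

theorem map_val_filter_lt_finRange {k : ℕ} (hk : k ≤ n) :
    ((List.finRange n).filter fun a : Fin n => decide ((a : ℕ) < k)).map Fin.val
      = List.range k := by
  obtain ⟨d, rfl⟩ := Nat.exists_eq_add_of_le hk
  rw [show (fun a : Fin (k + d) => decide ((a : ℕ) < k)) = (fun a => decide (a < k)) ∘ Fin.val
    from rfl, ← List.filter_map, List.map_coe_finRange_eq_range,
    List.range_add, List.filter_append, List.filter_eq_self.mpr (by simp),
    List.filter_eq_nil_iff.mpr (by simp), List.append_nil]

theorem map_val_filter_le_finRange {k : ℕ} (hk : k ≤ n) :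
    ((List.finRange n).filter fun a : Fin n => decide (k ≤ (a : ℕ))).map Fin.val
      = List.range' k (n - k) := by
  obtain ⟨d, rfl⟩ := Nat.exists_eq_add_of_le hk
  rw [show (fun a : Fin (k + d) => decide (k ≤ (a : ℕ))) = (fun a => decide (k ≤ a)) ∘ Fin.val
    from rfl, ← List.filter_map, List.map_coe_finRange_eq_range,
    List.range_add, List.filter_append, List.filter_eq_nil_iff.mpr (by simp),
    List.filter_eq_self.mpr (by simp), List.nil_append, List.range'_eq_map_range,
    Nat.add_sub_cancel_left]

theorem lowMon_zero : lowMon n 0 = 1 := by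
  simp [lowMon]

theorem lowMon_succ {k : ℕ} (hk : k < n) : lowMon n (k + 1) = lowMon n k * psv n ⟨k, hk⟩ := by
  have hlist : ((List.finRange n).filter fun a : Fin n => decide ((a : ℕ) < k + 1))
      = ((List.finRange n).filter fun a : Fin n => decide ((a : ℕ) < k)) ++ [⟨k, hk⟩] := by
    apply List.map_injective_iff.mpr Fin.val_injective
    rw [map_val_filter_lt_finRange hk, List.map_append, map_val_filter_lt_finRange hk.le,
      List.range_succ]
    rfl
  rw [lowMon, hlist, List.map_append, List.prod_append]
  simp [lowMon]

theorem lowMon_self : lowMon n n = psvTop n := by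
  rw [lowMon, List.filter_eq_self.mpr (by simp), psvTop]

theorem highBarMon_self : highBarMon n n = 1 := by
  rw [highBarMon, List.filter_eq_nil_iff.mpr (by simp), List.map_nil, List.prod_nil]

theorem highBarMon_of_lt {k : ℕ} (hk : k < n) :
    highBarMon n k = psb n ⟨k, hk⟩ * highBarMon n (k + 1) := by
  have hlist : ((List.finRange n).filter fun a : Fin n => decide (k ≤ (a : ℕ)))
      = ⟨k, hk⟩ :: ((List.finRange n).filter fun a : Fin n => decide (k + 1 ≤ (a : ℕ))) := by
    apply List.map_injective_iff.mpr Fin.val_injective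
    rw [map_val_filter_le_finRange hk.le, List.map_cons, map_val_filter_le_finRange hk,
      show n - k = n - (k + 1) + 1 by omega, List.range'_succ]
  rw [highBarMon, hlist, List.map_cons, List.prod_cons, highBarMon]

theorem psv_mul_psv_anticomm (a b : Fin n) : psv n a * psv n b = -(psv n b * psv n a) :=
  ExteriorAlgebra.ι_mul_ι_anticomm _ _

theorem psv_mul_psb_anticomm (a b : Fin n) : psv n a * psb n b = -(psb n b * psv n a) :=
  ExteriorAlgebra.ι_mul_ι_anticomm _ _

theorem lowMon_mem_pow {k : ℕ} (hk : k ≤ n) : lowMon n k ∈ PV n ^ k := by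
  induction k with
  | zero => exact lowMon_zero (n := n) ▸ Submodule.one_le.mp le_rfl
  | succ k ih =>
    rw [lowMon_succ hk, pow_succ]
    exact Submodule.mul_mem_mul (ih (by omega)) (Submodule.subset_span ⟨_, rfl⟩)

theorem lowMon_mul_psv_of_lt {k : ℕ} (hk : k ≤ n) {j : Fin n} (hj : (j : ℕ) < k) :
    lowMon n k * psv n j = 0 := by
  induction k with
  | zero => omega
  | succ k ih =>
    rw [lowMon_succ hk, mul_assoc]
    rcases Nat.lt_succ_iff_lt_or_eq.mp hj with hj | rfl
    · rw [psv_mul_psv_anticomm, mul_neg, ← mul_assoc, ih (by omega) hj, zero_mul, neg_zero]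
    · rw [show psv n ⟨j, hk⟩ * psv n j = 0 from ExteriorAlgebra.ι_sq_zero _, mul_zero]

theorem lowMon_mul_psb {k : ℕ} (hk : k ≤ n) (j : Fin n) :
    lowMon n k * psb n j = (-1 : ℂ) ^ k • (psb n j * lowMon n k) := by
  induction k with
  | zero => simp [lowMon_zero]
  | succ k ih =>
    rw [lowMon_succ hk, mul_assoc, psv_mul_psb_anticomm, mul_neg, ← mul_assoc, ih (by omega),
      smul_mul_assoc, pow_succ, mul_neg_one, neg_smul, mul_assoc]

theorem lowMon_mul_psbMulPsv_of_lt {k : ℕ} (hk : k ≤ n) {j : Fin n} (hj : (j : ℕ) < k) :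
    lowMon n k * psbMulPsv n j = 0 := by
  rw [coe_psbMulPsv, ← mul_assoc, lowMon_mul_psb hk, smul_mul_assoc, mul_assoc,
    lowMon_mul_psv_of_lt hk hj, mul_zero, smul_zero]

theorem lowMon_mul_fourierKernel {k : ℕ} (hk : k ≤ n) :
    lowMon n k * fourierKernel n
      = lowMon n k * ↑(∏ j ∈ {j : Fin n | k ≤ (j : ℕ)}, (1 + Complex.I • psbMulPsv n j)) := by
  have habsorb :
      lowMon n k * ↑(∏ j ∈ {j : Fin n | (j : ℕ) < k}, (1 + Complex.I • psbMulPsv n j))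
        = lowMon n k := by
    refine prod_induction _ (fun z : Subalgebra.center ℂ (Egr n) => lowMon n k * z = lowMon n k)
      (fun a b ha hb => by rw [MulMemClass.coe_mul, ← mul_assoc, ha, hb])
      (by rw [OneMemClass.coe_one, mul_one]) fun j hj => ?_
    rw [Subalgebra.coe_add, Subalgebra.coe_smul, mul_add, mul_smul_comm,
      lowMon_mul_psbMulPsv_of_lt hk (mem_filter.mp hj).2, smul_zero, add_zero, OneMemClass.coe_one,
      mul_one]
  rw [fourierKernel_eq_prod, ← prod_filter_mul_prod_filter_not univ (fun j : Fin n => (j : ℕ) < k),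
    MulMemClass.coe_mul, ← mul_assoc, habsorb]
  simp only [not_lt]

abbrev algDMulPV (n d : ℕ) : Submodule ℂ (Egr n) := Subalgebra.toSubmodule (AlgD n) * PV n ^ d

theorem smul_psbMulPsv_mul_mem {d : ℕ} (r : ℂ) (j : Fin n) {x : Egr n} (hx : x ∈ algDMulPV n d) :
    ↑(r • psbMulPsv n j) * x ∈ algDMulPV n (d + 1) := by
  refine Submodule.mul_induction_on hx (fun ξ hξ y hy => ?_) fun x y hx hy => ?_
  · rw [← mul_assoc, ← Subalgebra.mem_center_iff.mp (r • psbMulPsv n j).2 ξ]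
    have hsplit : ξ * ↑(r • psbMulPsv n j) * y = (r • (ξ * psb n j)) * (psv n j * y) := by
      simp only [Subalgebra.coe_smul, coe_psbMulPsv, smul_mul_assoc, mul_smul_comm, mul_assoc]
    rw [hsplit, algDMulPV, pow_succ']
    exact Submodule.mul_mem_mul
      (Submodule.smul_mem _ r ((AlgD n).mul_mem hξ (Algebra.subset_adjoin ⟨j, rfl⟩)))
      (Submodule.mul_mem_mul (Submodule.subset_span ⟨j, rfl⟩) hy)
  · rw [mul_add]; exact add_mem hx hy

theorem prod_smul_psbMulPsv_mul_mem {d : ℕ} (r : ℂ) (t : Finset (Fin n)) {x : Egr n}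
    (hx : x ∈ algDMulPV n d) : ↑(∏ j ∈ t, r • psbMulPsv n j) * x ∈ algDMulPV n (d + #t) := by
  classical
  induction t using Finset.induction_on with
  | empty => simpa using hx
  | insert a t ha ih =>
    rw [prod_insert ha, MulMemClass.coe_mul, mul_assoc, card_insert_of_notMem ha, ← add_assoc]
    exact smul_psbMulPsv_mul_mem r a ih

theorem LinearMap.eq_zero_of_mem_algDMulPV (Ber : Egr n →ₗ[ℂ] Egr n)
    (hBer_low : ∀ ξ ∈ AlgD n, ∀ k < n, ∀ y ∈ ((PV n) ^ k : Submodule ℂ (Egr n)),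
      Ber (ξ * y) = 0) {d : ℕ} (hd : d < n) {x : Egr n} (hx : x ∈ algDMulPV n d) : Ber x = 0 :=
  (Submodule.mul_le.mpr fun ξ hξ y hy => hBer_low ξ hξ d hd y hy :
    algDMulPV n d ≤ LinearMap.ker Ber) hx

theorem lowMon_mem_algDMulPV {k : ℕ} (hk : k ≤ n) : lowMon n k ∈ algDMulPV n k :=
  one_mul (lowMon n k) ▸ Submodule.mul_mem_mul (AlgD n).one_mem (lowMon_mem_pow hk)

theorem highBarMon_mem_algD (k : ℕ) : highBarMon n k ∈ AlgD n :=
  Subalgebra.list_prod_mem _ fun _ hx => by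
    obtain ⟨a, -, rfl⟩ := List.mem_map.mp hx
    exact Algebra.subset_adjoin ⟨a, rfl⟩

theorem I_mul_neg_one_pow_mul_I_pow {k : ℕ} (hk : k < n) :
    Complex.I * (-1) ^ k * Complex.I ^ (n ^ 2 - (k + 1) ^ 2) = Complex.I ^ (n ^ 2 - k ^ 2) := by
  have hsq : (k + 1) ^ 2 ≤ n ^ 2 := Nat.pow_le_pow_left hk 2
  have hexp : n ^ 2 - k ^ 2 = (n ^ 2 - (k + 1) ^ 2) + 2 * k + 1 := by
    have : (k + 1) ^ 2 = k ^ 2 + 2 * k + 1 := by ring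
    omega
  rw [hexp, pow_add, pow_add, pow_mul, Complex.I_sq]
  ring

theorem lowMon_mul_prod_smul_psbMulPsv {k : ℕ} (hk : k ≤ n) :
    lowMon n k * ↑(∏ j ∈ {j : Fin n | k ≤ (j : ℕ)}, Complex.I • psbMulPsv n j)
      = Complex.I ^ (n ^ 2 - k ^ 2) • (highBarMon n k * psvTop n) := by
  induction hk using Nat.decreasingInduction with
  | self =>
    rw [filter_eq_empty_iff.mpr fun j _ => not_le.mpr j.isLt, prod_empty, OneMemClass.coe_one,
      mul_one, lowMon_self, highBarMon_self, Nat.sub_self, pow_zero, one_smul, one_mul]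
  | of_succ k hk ih =>
    have hset : ({j | k ≤ (j : ℕ)} : Finset (Fin n))
        = insert ⟨k, hk⟩ ({j | k + 1 ≤ (j : ℕ)} : Finset (Fin n)) := by
      ext j
      simp only [mem_filter, mem_univ, true_and, mem_insert, Fin.ext_iff]
      omega
    rw [hset, prod_insert (by simp), MulMemClass.coe_mul, Subalgebra.coe_smul, coe_psbMulPsv]
    set P : Egr n := ↑(∏ j ∈ {j : Fin n | k + 1 ≤ (j : ℕ)}, Complex.I • psbMulPsv n j)
    calc lowMon n k * (Complex.I • (psb n ⟨k, hk⟩ * psv n ⟨k, hk⟩) * P)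
        = Complex.I • (lowMon n k * psb n ⟨k, hk⟩ * (psv n ⟨k, hk⟩ * P)) := by
          simp only [mul_smul_comm, smul_mul_assoc, mul_assoc]
      _ = (Complex.I * (-1) ^ k) • (psb n ⟨k, hk⟩ * (lowMon n (k + 1) * P)) := by
          rw [lowMon_mul_psb hk.le, lowMon_succ hk, smul_mul_assoc, smul_smul, mul_assoc,
            mul_assoc]
      _ = Complex.I ^ (n ^ 2 - k ^ 2) • (highBarMon n k * psvTop n) := by
          rw [ih, mul_smul_comm, smul_smul, I_mul_neg_one_pow_mul_I_pow hk, highBarMon_of_lt hk,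
            mul_assoc]

end

theorem statement6 {n : ℕ} (Ber : Egr n →ₗ[ℂ] Egr n)
    (hBer_top : ∀ ξ ∈ AlgD n, Ber (ξ * psvTop n) = ξ)
    (hBer_low : ∀ ξ ∈ AlgD n, ∀ k < n, ∀ y ∈ ((PV n) ^ k : Submodule ℂ (Egr n)),
      Ber (ξ * y) = 0)
    (k : ℕ) (hk : k ≤ n) :
    Ber (lowMon n k * fourierKernel n)
      = (Complex.I ^ (n ^ 2 - k ^ 2)) • highBarMon n k := by
  set high : Finset (Fin n) := {j | k ≤ (j : ℕ)}
  rw [lowMon_mul_fourierKernel hk, prod_one_add, AddSubmonoidClass.coe_finsetSum, mul_sum,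
    map_sum, sum_eq_single_of_mem high (mem_powerset_self high)]
  · rw [lowMon_mul_prod_smul_psbMulPsv hk, map_smul, hBer_top _ (highBarMon_mem_algD k)]
  · intro t ht hne
    have hlt : #t < n - k := Fin.card_filter_le_val (n := n) k ▸
      card_lt_card (ssubset_of_subset_of_ne (mem_powerset.mp ht) hne)
    refine Ber.eq_zero_of_mem_algDMulPV hBer_low (d := k + #t) (by omega) ?_
    rw [Subalgebra.mem_center_iff.mp (∏ j ∈ t, Complex.I • psbMulPsv n j).2]
    exact prod_smul_psbMulPsv_mul_mem _ t (lowMon_mem_algDMulPV hk)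
end
end

section
/- Assume additionally that there exists an A-module map π : A ⊗ h → K with π ∘ ι = id_K. Then the D₂-cohomology of B is concentrated in first degree p = 0: for every p > 0 and q, every η ∈ B^{p,q} with D₂η = 0 is of the form D₂ρ for some ρ ∈ B^{p−1,q+1}; and in degree p = 0 the kernel of D₂ : B^{0,q} → B^{1,q−1} consists exactly of those η ∈ B^{0,q} whose A-multilinear extension vanishes whenever one of its arguments lies in ι(K) ⊆ A ⊗ h. -/
/-!
STATEMENT 16.  Context: as in Statement 15, a finite-dimensional real Lie algebra
`h` acts by derivations (`act`) on a commutative real algebra `A`, and `K ⊆ A ⊗ h`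
is an `A`-submodule stable under the `h`-action; cochains `η ∈ B^{p,q}` are
formalized through their canonical `A`-multilinear extensions (`Raw`/`IsCochain`),
and `D₂ : B^{p,q} → B^{p+1,q−1}` is
`(D₂η)(ξ̄)(φ₁,…,φ_{p+1}) = Σᵢ η(ι(φᵢ), ξ̄)(φ₁,…,φ̂ᵢ,…)`.

Hypothesis: there is an `A`-module map `π : A ⊗ h → K` with `π ∘ ι = id_K`.
Conclusion: the `D₂`-cohomology is concentrated in first degree `p = 0`: for
`p > 0`, every `D₂`-closed `η ∈ B^{p,q}` is `D₂ρ` for some `ρ ∈ B^{p−1,q+1}`;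
and in degree `p = 0` the kernel of `D₂` consists exactly of the cochains
vanishing whenever one of their arguments lies in `ι(K) ⊆ A ⊗ h`.
-/

open scoped TensorProduct
open Finset

noncomputable section

variable (A : Type) [CommRing A] [Algebra ℝ A]
variable (h : Type) [LieRing h] [LieAlgebra ℝ h]

/-- The `A`-module `A ⊗ h`. -/
abbrev AH (A : Type) [CommRing A] [Algebra ℝ A]
    (h : Type) [LieRing h] [LieAlgebra ℝ h] := A ⊗[ℝ] h

/-- The extension of the `h`-action on `A` (by derivations, `act`) to an
`A`-linear "anchor" `A ⊗ h → End(A)`, `f ⊗ ξ ↦ f · (ξ · —)`. -/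
def actAH (act : h →ₗ[ℝ] Module.End ℝ A) : AH A h →ₗ[ℝ] Module.End ℝ A :=
  TensorProduct.lift
    (((LinearMap.llcomp ℝ A A A).comp (LinearMap.mul ℝ A)).compl₂ act)

section

attribute [local instance 100] LieRing.ofAssociativeRing

/-- The "current algebra" part of the bracket on `A ⊗ h`:
`(f⊗ξ, g⊗ν) ↦ fg ⊗ [ξ,ν]`. -/
def curBr : AH A h →ₗ[ℝ] AH A h →ₗ[ℝ] AH A h :=
  TensorProduct.lift
    (((TensorProduct.mapBilinear (σ₁₂ := RingHom.id ℝ) A h A h).comp (LinearMap.mul ℝ A)).compl₂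
      (LieAlgebra.ad ℝ h).toLinearMap)

end

/-- The "action" part: `(f⊗ξ, g⊗ν) ↦ (f · ξ(g)) ⊗ ν`. -/
def actBr (act : h →ₗ[ℝ] Module.End ℝ A) : AH A h →ₗ[ℝ] AH A h →ₗ[ℝ] AH A h :=
  TensorProduct.lift
    ((((LinearMap.llcomp ℝ A A A).comp (LinearMap.mul ℝ A)).compl₂ act).compr₂
      ((TensorProduct.mapBilinear (σ₁₂ := RingHom.id ℝ) A h A h).flip LinearMap.id))

/-- The canonical action of `A ⊗ h` on `A ⊗ h` extending the `h`-action
`ξ·(g⊗ν) = (ξ·g)⊗ν + g⊗[ξ,ν]` (A-linearly in the acting variable). -/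
def repAH (act : h →ₗ[ℝ] Module.End ℝ A) : AH A h →ₗ[ℝ] AH A h →ₗ[ℝ] AH A h :=
  curBr A h + actBr A h act

/-- The (transformation Lie algebroid) bracket of `A ⊗ h`:
`[f⊗ξ, g⊗ν] = fg⊗[ξ,ν] + f(ξ·g)⊗ν − g(ν·f)⊗ξ`. -/
def brAH (act : h →ₗ[ℝ] Module.End ℝ A) : AH A h →ₗ[ℝ] AH A h →ₗ[ℝ] AH A h :=
  curBr A h + actBr A h act - (actBr A h act).flip

/-- The space of raw `(p,q)`-cochains: functions of `q` arguments from `A ⊗ h`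
(the canonical `A`-multilinear extension of the `h`-slots) and `p` arguments
from `K ⊆ A ⊗ h`, with values in `A`. -/
def Raw (A : Type) [CommRing A] [Algebra ℝ A] (h : Type) [LieRing h] [LieAlgebra ℝ h]
    (p q : ℕ) : Type :=
  (Fin q → AH A h) → (Fin p → AH A h) → A

/-- The list of arguments `([ξᵢ,ξⱼ], ξ₁, …, ξ̂ᵢ, …, ξ̂ⱼ, …)` obtained from
`(ξ₁, …, ξ_{q+1})` by removing the `i`-th and `j`-th entries (for `i < j`) and
prepending the bracket `br`. -/
def insBr {q : ℕ} (br : AH A h) (xs : Fin (q + 1) → AH A h) (i j : Fin (q + 1)) :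
    Fin q → AH A h :=
  fun m =>
    if (m : ℕ) = 0 then br
    else
      xs ⟨((fun t => if t < (i : ℕ) then t else if t + 1 < (j : ℕ) then t + 1 else t + 2)
            ((m : ℕ) - 1)) % (q + 1),
          Nat.mod_lt _ (Nat.succ_pos q)⟩

/-- The Chevalley–Eilenberg differential `D₁` (of the Lie algebra `h` acting on the
symmetric `K`-multilinear forms, written on the canonical `A`-multilinear
extensions):
`(D₁η)(ξ₁,…,ξ_{q+1}) = Σᵢ (−1)^{i−1} ξᵢ·(η(ξ₁,…,ξ̂ᵢ,…)) +
Σ_{i<j} (−1)^{i+j} η([ξᵢ,ξⱼ], ξ₁,…,ξ̂ᵢ,…,ξ̂ⱼ,…)`, where the action on the value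
is `(ξ·σ)(φ₁,…,φ_p) = ξ·(σ(φs)) − Σ_k σ(φ₁,…,ξ·φ_k,…,φ_p)`. -/
def D1 (act : h →ₗ[ℝ] Module.End ℝ A) {p q : ℕ} (η : Raw A h p q) :
    Raw A h p (q + 1) :=
  fun xs φs =>
    (∑ i : Fin (q + 1), ((-1 : ℝ) ^ (i : ℕ)) •
      (actAH A h act (xs i) (η (xs ∘ i.succAbove) φs)
        - ∑ k : Fin p,
            η (xs ∘ i.succAbove)
              (Function.update φs k (repAH A h act (xs i) (φs k)))))
    + ∑ i : Fin (q + 1), ∑ j : Fin (q + 1),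
        if (i : ℕ) < (j : ℕ) then
          ((-1 : ℝ) ^ ((i : ℕ) + (j : ℕ))) •
            η (insBr A h (brAH A h act (xs i) (xs j)) xs i j) φs
        else 0

/-- The Koszul-type differential `D₂`:
`(D₂η)(ξ₁,…,ξ_{q})(φ₁,…,φ_{p+1}) = Σᵢ η(ι(φᵢ), ξ₁,…,ξ_q)(φ₁,…,φ̂ᵢ,…,φ_{p+1})`. -/
def D2 {p q : ℕ} (η : Raw A h p (q + 1)) : Raw A h (p + 1) q :=
  fun xs φs => ∑ i : Fin (p + 1), η (Fin.cons (φs i) xs) (φs ∘ i.succAbove)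

/-- Membership of a raw cochain in `B^{p,q}`: `A`-multilinear and alternating in
the `q` slots from `A ⊗ h` (this is the canonical extension of "alternating
ℝ-multilinear in the arguments from `h`"), and — on arguments from `K` —
symmetric and `A`-multilinear in the `p` slots from `K`. -/
def IsCochain (K : Submodule A (AH A h)) {p q : ℕ} (η : Raw A h p q) : Prop :=
  (∀ xs φs (i : Fin q) (x y : AH A h),
      η (Function.update xs i (x + y)) φs
        = η (Function.update xs i x) φs + η (Function.update xs i y) φs) ∧
  (∀ xs φs (i : Fin q) (a : A) (x : AH A h),
      η (Function.update xs i (a • x)) φs = a * η (Function.update xs i x) φs) ∧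
  (∀ xs φs (i j : Fin q), i ≠ j → xs i = xs j → η xs φs = 0) ∧
  (∀ xs φs (k : Fin p) (x y : AH A h), (∀ l, φs l ∈ K) → x ∈ K → y ∈ K →
      η xs (Function.update φs k (x + y))
        = η xs (Function.update φs k x) + η xs (Function.update φs k y)) ∧
  (∀ xs φs (k : Fin p) (a : A) (x : AH A h), (∀ l, φs l ∈ K) → x ∈ K →
      η xs (Function.update φs k (a • x)) = a * η xs (Function.update φs k x)) ∧
  (∀ xs φs (k l : Fin p), (∀ m, φs m ∈ K) →
      η xs (φs ∘ (Equiv.swap k l)) = η xs φs)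

/-!
Split every `h`-argument along the retraction, `x = π x + (x - π x)`; the `s`-component of a
cochain takes the `π`-parts of the arguments indexed by `s` and the other parts elsewhere.
The Koszul homotopy `S`, which moves `π` of one `h`-argument into a new `K`-slot (with
alternating signs), satisfies `D₂ S + S D₂ = E` on `K`-arguments, where the Euler operator `E`
multiplies the `s`-component of a cochain with `p + 1` `K`-slots by `p + 1 + #s`. Over `ℝ` this
weight is invertible, and `E⁻¹` preserves cochains and `D₂`-closedness, so a closed `η` is
`D₂ (S (E⁻¹ η))`. In degree `p = 0`, `D₂ η = 0` says that `η` vanishes when its first argument lies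
in `K`, and alternation moves any argument to the front.
-/

lemma eq_zero_of_eq_neg {M : Type*} [AddCommGroup M] [Module ℝ M] {a : M} (ha : a = -a) :
    a = 0 := by
  rw [eq_neg_iff_add_eq_zero, ← two_smul ℝ] at ha
  exact (smul_eq_zero.mp ha).resolve_left two_ne_zero

lemma Fin.removeNth_succ_cons {α : Type*} {m : ℕ} (x : α) (xs : Fin (m + 1) → α)
    (j : Fin (m + 1)) :
    j.succ.removeNth (Fin.cons x xs : Fin (m + 2) → α) = Fin.cons x (j.removeNth xs) := by
  ext i
  cases i using Fin.cases <;> simp [Fin.removeNth_apply, Fin.succ_succAbove_succ]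

lemma Fin.cons_comp_swap {α : Type*} {m : ℕ} (x : α) (xs : Fin m → α) (k l : Fin m) :
    (Fin.cons x (xs ∘ Equiv.swap k l) : Fin (m + 1) → α)
      = Fin.cons x xs ∘ Equiv.swap k.succ l.succ := by
  ext j
  cases j using Fin.cases with
  | zero => simp [Equiv.swap_apply_of_ne_of_ne (Fin.succ_ne_zero k).symm (Fin.succ_ne_zero l).symm]
  | succ j => simp [(Fin.succ_injective _).swap_apply]

section

variable {A h}
variable {K : Submodule A (AH A h)} {p q n : ℕ}

lemma D2_apply {η : Raw A h p (q + 1)} (xs : Fin q → AH A h) (φs : Fin (p + 1) → AH A h) :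
    D2 A h η xs φs = ∑ i, η (Fin.cons (φs i) xs) (i.removeNth φs) := rfl

namespace IsCochain

def altMap {η : Raw A h p q} (hη : IsCochain A h K η) (φs : Fin p → AH A h) :
    AH A h [⋀^Fin q]→ₗ[A] A where
  toFun xs := η xs φs
  map_update_add' xs i x y := by convert hη.1 xs φs i x y
  map_update_smul' xs i a x := by rw [smul_eq_mul]; convert hη.2.1 xs φs i a x
  map_eq_zero_of_eq' xs i j hx hij := hη.2.2.1 xs φs i j hij hx

@[simp]
lemma altMap_apply {η : Raw A h p q} (hη : IsCochain A h K η) (φs : Fin p → AH A h)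
    (xs : Fin q → AH A h) : hη.altMap φs xs = η xs φs := rfl

lemma apply_eq_zero_of_eq_zero {η : Raw A h p q} (hη : IsCochain A h K η)
    {xs : Fin q → AH A h} (φs : Fin p → AH A h) (i : Fin q) (hi : xs i = 0) : η xs φs = 0 :=
  (hη.altMap φs).map_coord_zero i hi

lemma apply_update {η : Raw A h p (n + 1)} (hη : IsCochain A h K η)
    (xs : Fin (n + 1) → AH A h) (φs : Fin p → AH A h) (k : Fin (n + 1)) (y : AH A h) :
    η (Function.update xs k y) φs = (-1 : ℤ) ^ (k : ℕ) • η (Fin.cons y (k.removeNth xs)) φs := by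
  rw [← hη.altMap_apply, ← Fin.insertNth_removeNth, AlternatingMap.map_insertNth]
  rfl

lemma apply_comp_perm {η : Raw A h p q} (hη : IsCochain A h K η) (σ : Equiv.Perm (Fin p))
    (xs : Fin q → AH A h) {φs : Fin p → AH A h} (hφs : ∀ l, φs l ∈ K) :
    η xs (φs ∘ σ) = η xs φs := by
  induction σ using Equiv.Perm.swap_induction_on generalizing φs with
  | one => rfl
  | swap_mul σ k l _ ih =>
    rw [Equiv.Perm.coe_mul, ← Function.comp_assoc, ih (φs := φs ∘ Equiv.swap k l) fun m => hφs _,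
      hη.2.2.2.2.2 xs φs k l hφs]

lemma apply_cons_removeNth {η : Raw A h (p + 1) q} (hη : IsCochain A h K η)
    (xs : Fin q → AH A h) {φs : Fin (p + 1) → AH A h} (hφs : ∀ l, φs l ∈ K) (i : Fin (p + 1)) :
    η xs (Fin.cons (φs i) (i.removeNth φs)) = η xs φs := by
  rw [Fin.cons_removeNth_eq_comp_cycleRange_symm, hη.apply_comp_perm _ xs hφs]

end IsCochain

section EulerOperator

variable (π : AH A h →ₗ[A] AH A h)

def projArgs (s : Finset (Fin n)) (xs : Fin n → AH A h) : Fin n → AH A h :=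
  s.piecewise (π ∘ xs) (xs - π ∘ xs)

def euler (ζ : Raw A h (p + 1) n) : Raw A h (p + 1) n :=
  fun xs φs => (p + 1) • ζ xs φs + ∑ k, ζ (Function.update xs k (π (xs k))) φs

def eulerInv (η : Raw A h (p + 1) n) : Raw A h (p + 1) n :=
  fun xs φs => ∑ s : Finset (Fin n), ((p + 1 + #s : ℝ)⁻¹) • η (projArgs π s xs) φs

lemma projArgs_comp_perm (s : Finset (Fin n)) (xs : Fin n → AH A h) (σ : Equiv.Perm (Fin n)) :
    projArgs π s (xs ∘ σ) = projArgs π (s.map σ.toEmbedding) xs ∘ σ := by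
  ext j
  simp [projArgs, Finset.piecewise]

lemma sum_projArgs {η : Raw A h p n} (hη : IsCochain A h K η) (xs : Fin n → AH A h)
    (φs : Fin p → AH A h) : ∑ s, η (projArgs π s xs) φs = η xs φs := by
  have := (hη.altMap φs).map_add_univ (π ∘ xs) (xs - π ∘ xs)
  rw [add_sub_cancel] at this
  exact this.symm

lemma eulerInv_comp_swap {η : Raw A h (p + 1) n} (hη : IsCochain A h K η) (xs : Fin n → AH A h)
    (φs : Fin (p + 1) → AH A h) {i j : Fin n} (hij : i ≠ j) :
    eulerInv π η (xs ∘ Equiv.swap i j) φs = -eulerInv π η xs φs := by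
  let σ := (Equiv.swap i j).finsetCongr
  rw [eulerInv, eulerInv, ← Finset.sum_neg_distrib]
  conv_rhs => rw [← σ.sum_comp]
  refine Finset.sum_congr rfl fun s _ => ?_
  rw [projArgs_comp_perm, ← hη.altMap_apply, AlternatingMap.map_swap _ _ hij, smul_neg]
  simp [σ]

lemma eulerInv_isCochain {η : Raw A h (p + 1) n} (hη : IsCochain A h K η) :
    IsCochain A h K (eulerInv π η) := by
  let M (φs : Fin (p + 1) → AH A h) : MultilinearMap A (fun _ : Fin n => AH A h) A :=
    ∑ s : Finset (Fin n), ((p + 1 + #s : ℝ)⁻¹) • (hη.altMap φs).toMultilinearMap.compLinearMap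
      (fun j => if j ∈ s then π else LinearMap.id - π)
  have hM xs φs : M φs xs = eulerInv π η xs φs := by
    simp only [M, eulerInv, _root_.sum_apply, _root_.smul_apply]
    refine Finset.sum_congr rfl fun s _ => ?_
    rw [MultilinearMap.compLinearMap_apply, AlternatingMap.coe_multilinearMap, hη.altMap_apply]
    congr 3
    ext j
    by_cases hj : j ∈ s <;> simp [projArgs, hj]
  refine ⟨fun xs φs i x y => ?_, fun xs φs i a x => ?_, fun xs φs i j hij hx => ?_,
    fun xs φs k x y hφs hx hy => ?_, fun xs φs k a x hφs hx => ?_, fun xs φs k l hφs => ?_⟩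
  · convert (M φs).map_update_add xs i x y using 1 <;> simp only [hM]
  · convert (M φs).map_update_smul xs i a x using 1 <;> simp only [hM, smul_eq_mul]
  · have hswap : xs ∘ Equiv.swap i j = xs := by
      ext m
      rcases eq_or_ne m i with rfl | hmi
      · simp [hx]
      rcases eq_or_ne m j with rfl | hmj
      · simp [hx]
      · simp [Equiv.swap_apply_of_ne_of_ne hmi hmj]
    have := eulerInv_comp_swap π hη xs φs hij
    rw [hswap] at this
    exact eq_zero_of_eq_neg this
  · simp only [eulerInv, hη.2.2.2.1 _ φs k x y hφs hx hy, smul_add, Finset.sum_add_distrib]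
  · simp only [eulerInv, hη.2.2.2.2.1 _ φs k a x hφs hx, Finset.mul_sum, mul_smul_comm]
  · simp only [eulerInv, hη.2.2.2.2.2 _ φs k l hφs]

variable {π}

lemma euler_eulerInv (hπ : LinearMap.IsProj K π) {η : Raw A h (p + 1) n}
    (hη : IsCochain A h K η) (xs : Fin n → AH A h) (φs : Fin (p + 1) → AH A h) :
    euler π (eulerInv π η) xs φs = η xs φs := by
  have hππ (x : AH A h) : π (π x) = π x := hπ.map_id _ (hπ.map_mem x)
  have hproj_update (s : Finset (Fin n)) (k : Fin n) :
      η (projArgs π s (Function.update xs k (π (xs k)))) φs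
        = if k ∈ s then η (projArgs π s xs) φs else 0 := by
    split_ifs with hk
    · congr 1
      ext j
      rcases eq_or_ne j k with rfl | hjk <;> simp [projArgs, Finset.piecewise, *]
    · exact hη.apply_eq_zero_of_eq_zero φs k (by simp [projArgs, hk, hππ])
  have hweight (s : Finset (Fin n)) :
      ((p + 1 : ℕ) : ℝ) * (p + 1 + #s : ℝ)⁻¹ + #s * (p + 1 + #s : ℝ)⁻¹ = 1 := by
    rw [← add_mul, Nat.cast_add_one, mul_inv_cancel₀ (by positivity)]
  simp only [euler, eulerInv, hproj_update, smul_ite, smul_zero]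
  rw [Finset.sum_comm, ← sum_projArgs π hη xs φs, Finset.smul_sum, ← Finset.sum_add_distrib]
  refine Finset.sum_congr rfl fun s _ => ?_
  rw [Finset.sum_ite_mem, Finset.univ_inter, Finset.sum_const, ← Nat.cast_smul_eq_nsmul ℝ,
    ← Nat.cast_smul_eq_nsmul ℝ, smul_smul, smul_smul, ← add_smul, hweight, one_smul]

lemma projArgs_cons_of_mem {s : Finset (Fin (n + 1))} (hs : 0 ∈ s) {x : AH A h} (hx : π x = x)
    (ys : Fin n → AH A h) :
    projArgs π s (Fin.cons x ys) = Fin.cons x (projArgs π {m | m.succ ∈ s} ys) := by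
  ext j
  cases j using Fin.cases <;> simp [projArgs, Finset.piecewise, hs, hx]

lemma D2_eulerInv_eq_zero (hπ : LinearMap.IsProj K π) {η : Raw A h (p + 1) (q + 1)}
    (hη : IsCochain A h K η) (hcl : ∀ ys Φ, (∀ l, Φ l ∈ K) → D2 A h η ys Φ = 0)
    (ys : Fin q → AH A h) {Φ : Fin (p + 2) → AH A h} (hΦ : ∀ l, Φ l ∈ K) :
    D2 A h (eulerInv π η) ys Φ = 0 := by
  simp only [D2, eulerInv]
  rw [Finset.sum_comm]
  refine Finset.sum_eq_zero fun s _ => ?_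
  by_cases hs : 0 ∈ s
  · simp only [projArgs_cons_of_mem hs (hπ.map_id _ (hΦ _)), ← Finset.smul_sum]
    rw [← D2, hcl _ Φ hΦ, smul_zero]
  · refine Finset.sum_eq_zero fun i _ => ?_
    rw [hη.apply_eq_zero_of_eq_zero _ 0
      (by simp [projArgs, Finset.piecewise, hs, hπ.map_id _ (hΦ i)]), smul_zero]

end EulerOperator

section Homotopy

variable (π : AH A h →ₗ[A] AH A h)

def koszulHomotopy (ζ : Raw A h (p + 1) n) : Raw A h p (n + 1) :=
  fun xs φs => ∑ k : Fin (n + 1),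
    (-1 : ℤ) ^ (k : ℕ) • ζ (k.removeNth xs) (Fin.cons (π (xs k)) (π ∘ φs))

variable {π}

def koszulHomotopyCurried (hπ : LinearMap.IsProj K π) {ζ : Raw A h (p + 1) n}
    (hζ : IsCochain A h K ζ) (φs : Fin p → AH A h) : AH A h →ₗ[A] AH A h [⋀^Fin n]→ₗ[A] A where
  toFun x := hζ.altMap (Fin.cons (π x) (π ∘ φs))
  map_add' x y := by
    ext ys
    have := hζ.2.2.2.1 ys (Fin.cons (π x) (π ∘ φs)) 0 (π x) (π y)
      (Fin.forall_fin_succ.2 ⟨hπ.map_mem x, fun l => hπ.map_mem _⟩) (hπ.map_mem x) (hπ.map_mem y)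
    simpa only [Fin.update_cons_zero, map_add, AlternatingMap.add_apply, hζ.altMap_apply]
      using this
  map_smul' a x := by
    ext ys
    have := hζ.2.2.2.2.1 ys (Fin.cons (π x) (π ∘ φs)) 0 a (π x)
      (Fin.forall_fin_succ.2 ⟨hπ.map_mem x, fun l => hπ.map_mem _⟩) (hπ.map_mem x)
    simpa only [Fin.update_cons_zero, map_smul, AlternatingMap.smul_apply, hζ.altMap_apply,
      RingHom.id_apply, smul_eq_mul] using this

lemma koszulHomotopy_isCochain (hπ : LinearMap.IsProj K π) {ζ : Raw A h (p + 1) n}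
    (hζ : IsCochain A h K ζ) : IsCochain A h K (koszulHomotopy π ζ) := by
  let F φs := AlternatingMap.alternatizeUncurryFin (koszulHomotopyCurried hπ hζ φs)
  have hF xs φs : F φs xs = koszulHomotopy π ζ xs φs := by
    simp [F, AlternatingMap.alternatizeUncurryFin_apply, koszulHomotopy, koszulHomotopyCurried]
  have hmem (xs : Fin (n + 1) → AH A h) (φs : Fin p → AH A h) (k : Fin (n + 1)) :
      ∀ l, (Fin.cons (π (xs k)) (π ∘ φs) : Fin (p + 1) → AH A h) l ∈ K :=
    Fin.forall_fin_succ.2 ⟨hπ.map_mem _, fun l => hπ.map_mem _⟩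
  refine ⟨fun xs φs i x y => ?_, fun xs φs i a x => ?_, fun xs φs i j hij hx => ?_,
    fun xs φs k x y hφs hx hy => ?_, fun xs φs k a x hφs hx => ?_, fun xs φs k l hφs => ?_⟩
  · convert (F φs).map_update_add xs i x y using 1 <;> simp only [hF]
  · convert (F φs).map_update_smul xs i a x using 1 <;> simp only [hF, smul_eq_mul]
  · rw [← hF, (F φs).map_eq_zero_of_eq xs hx hij]
  · simp only [koszulHomotopy, Function.comp_update, Fin.cons_update, map_add, ← smul_add,
      ← Finset.sum_add_distrib]
    refine Finset.sum_congr rfl fun j _ => ?_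
    rw [hζ.2.2.2.1 _ _ _ _ _ (hmem xs φs j) (hπ.map_mem x) (hπ.map_mem y)]
  · simp only [koszulHomotopy, Function.comp_update, Fin.cons_update, map_smul, Finset.mul_sum]
    refine Finset.sum_congr rfl fun j _ => ?_
    rw [hζ.2.2.2.2.1 _ _ _ _ _ (hmem xs φs j) (hπ.map_mem x), mul_smul_comm]
  · simp only [koszulHomotopy, ← Function.comp_assoc, Fin.cons_comp_swap,
      hζ.2.2.2.2.2 _ _ _ _ (hmem xs φs _)]

lemma D2_koszulHomotopy (hπ : LinearMap.IsProj K π) (ζ : Raw A h (p + 1) (q + 1))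
    (xs : Fin (q + 1) → AH A h) {φs : Fin (p + 1) → AH A h} (hφs : ∀ l, φs l ∈ K) :
    D2 A h (koszulHomotopy π ζ) xs φs = ∑ m, ζ xs (Fin.cons (φs m) (m.removeNth φs))
      - ∑ k : Fin (q + 1), (-1 : ℤ) ^ (k : ℕ) • ∑ m,
          ζ (Fin.cons (φs m) (k.removeNth xs)) (Fin.cons (π (xs k)) (m.removeNth φs)) := by
  have hπφs (m : Fin (p + 1)) : π ∘ (φs ∘ m.succAbove) = m.removeNth φs :=
    funext fun l => hπ.map_id _ (hφs _)
  simp only [Finset.smul_sum]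
  rw [Finset.sum_comm, ← Finset.sum_sub_distrib]
  refine Finset.sum_congr rfl fun m _ => ?_
  simp only [koszulHomotopy, Fin.sum_univ_succ, hπφs, Fin.removeNth_succ_cons, Fin.removeNth_zero,
    Fin.tail_cons, Fin.cons_zero, Fin.cons_succ, hπ.map_id _ (hφs m), Fin.val_zero, pow_zero,
    one_smul, Fin.val_succ, pow_succ, mul_neg_one, neg_smul, Finset.sum_neg_distrib,
    ← sub_eq_add_neg]

lemma koszulHomotopy_D2 (hπ : LinearMap.IsProj K π) (ζ : Raw A h (p + 1) (q + 1))
    (xs : Fin (q + 1) → AH A h) {φs : Fin (p + 1) → AH A h} (hφs : ∀ l, φs l ∈ K) :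
    koszulHomotopy π (D2 A h ζ) xs φs
      = ∑ k : Fin (q + 1), (-1 : ℤ) ^ (k : ℕ) • ζ (Fin.cons (π (xs k)) (k.removeNth xs)) φs
        + ∑ k : Fin (q + 1), (-1 : ℤ) ^ (k : ℕ) • ∑ m,
          ζ (Fin.cons (φs m) (k.removeNth xs)) (Fin.cons (π (xs k)) (m.removeNth φs)) := by
  have hπφs : π ∘ φs = φs := funext fun l => hπ.map_id _ (hφs _)
  rw [← Finset.sum_add_distrib]
  refine Finset.sum_congr rfl fun k _ => ?_
  simp only [D2_apply, hπφs]
  rw [Fin.sum_univ_succ, smul_add]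
  simp only [Fin.cons_zero, Fin.cons_succ, Fin.removeNth_zero, Fin.tail_cons,
    Fin.removeNth_succ_cons, Finset.smul_sum]

lemma D2_koszulHomotopy_add_koszulHomotopy_D2 (hπ : LinearMap.IsProj K π)
    {ζ : Raw A h (p + 1) (q + 1)} (hζ : IsCochain A h K ζ) (xs : Fin (q + 1) → AH A h)
    {φs : Fin (p + 1) → AH A h} (hφs : ∀ l, φs l ∈ K) :
    D2 A h (koszulHomotopy π ζ) xs φs + koszulHomotopy π (D2 A h ζ) xs φs = euler π ζ xs φs := by
  rw [D2_koszulHomotopy hπ ζ xs hφs, koszulHomotopy_D2 hπ ζ xs hφs, euler]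
  simp only [hζ.apply_cons_removeNth xs hφs, ← hζ.apply_update, Finset.sum_const,
    Finset.card_univ, Fintype.card_fin]
  abel

lemma D2_koszulHomotopy_of_fin_zero (hπ : LinearMap.IsProj K π) {ζ : Raw A h (p + 1) 0}
    (hζ : IsCochain A h K ζ) (xs : Fin 0 → AH A h) {φs : Fin (p + 1) → AH A h}
    (hφs : ∀ l, φs l ∈ K) :
    D2 A h (koszulHomotopy π ζ) xs φs = euler π ζ xs φs := by
  have hπφs (m : Fin (p + 1)) : π ∘ m.removeNth φs = m.removeNth φs :=
    funext fun l => hπ.map_id _ (hφs _)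
  simp only [D2_apply, koszulHomotopy, euler, Fin.sum_univ_succ, Fin.sum_univ_zero, add_zero,
    Fin.val_zero, pow_zero, one_smul, Fin.removeNth_zero, Fin.tail_cons, Fin.cons_zero, hπφs,
    hπ.map_id _ (hφs _), hζ.apply_cons_removeNth xs hφs, Finset.sum_const, Finset.card_univ,
    Fintype.card_fin]

end Homotopy

theorem exists_D2_eq_of_D2_eq_zero {π : AH A h →ₗ[A] AH A h} (hπ : LinearMap.IsProj K π)
    {η : Raw A h (p + 1) (q + 1)} (hη : IsCochain A h K η)
    (hcl : ∀ ys Φ, (∀ l, Φ l ∈ K) → D2 A h η ys Φ = 0) :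
    ∃ ρ : Raw A h p (q + 2), IsCochain A h K ρ ∧
      ∀ xs φs, (∀ l, φs l ∈ K) → D2 A h ρ xs φs = η xs φs := by
  have hζ := eulerInv_isCochain π hη
  refine ⟨koszulHomotopy π (eulerInv π η), koszulHomotopy_isCochain hπ hζ, fun xs φs hφs => ?_⟩
  have hζcl : koszulHomotopy π (D2 A h (eulerInv π η)) xs φs = 0 :=
    Finset.sum_eq_zero fun k _ => by
      rw [D2_eulerInv_eq_zero hπ hη hcl _
        (Fin.forall_fin_succ.2 ⟨hπ.map_mem _, fun l => hπ.map_mem (φs l)⟩), smul_zero]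
  rw [← add_zero (D2 A h _ xs φs), ← hζcl, D2_koszulHomotopy_add_koszulHomotopy_D2 hπ hζ xs hφs,
    euler_eulerInv hπ hη]

theorem exists_D2_eq_of_fin_zero {π : AH A h →ₗ[A] AH A h} (hπ : LinearMap.IsProj K π)
    {η : Raw A h (p + 1) 0} (hη : IsCochain A h K η) :
    ∃ ρ : Raw A h p 1, IsCochain A h K ρ ∧
      ∀ xs φs, (∀ l, φs l ∈ K) → D2 A h ρ xs φs = η xs φs := by
  have hζ := eulerInv_isCochain π hη
  exact ⟨koszulHomotopy π (eulerInv π η), koszulHomotopy_isCochain hπ hζ, fun xs φs hφs => by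
    rw [D2_koszulHomotopy_of_fin_zero hπ hζ xs hφs, euler_eulerInv hπ hη]⟩

theorem D2_eq_zero_iff {η : Raw A h 0 (q + 1)} (hη : IsCochain A h K η) :
    (∀ xs φs, (∀ l, φs l ∈ K) → D2 A h η xs φs = 0) ↔
      ∀ xs, (∃ i, xs i ∈ K) → η xs (fun i => i.elim0) = 0 := by
  have hD2 (ys : Fin q → AH A h) (φs : Fin 1 → AH A h) :
      D2 A h η ys φs = η (Fin.cons (φs 0) ys) (fun i => i.elim0) := by
    rw [D2_apply, Fin.sum_univ_one, Subsingleton.elim (Fin.removeNth 0 φs)]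
  constructor
  · rintro hcl xs ⟨i, hi⟩
    have hcons := hcl (i.removeNth xs) (fun _ => xs i) fun _ => hi
    rw [hD2] at hcons
    rw [← Function.update_eq_self i xs, hη.apply_update, hcons, smul_zero]
  · rintro hv xs φs hφs
    rw [hD2]
    exact hv _ ⟨0, hφs 0⟩

end

theorem statement16
    -- K is an A-submodule of A ⊗ h stable under the h-action
    (K : Submodule A (AH A h))
    -- an A-module retraction π : A ⊗ h → K of the inclusion ι : K → A ⊗ h
    (π : AH A h →ₗ[ℝ] AH A h)
    (hπK : ∀ x, π x ∈ K) (hπA : ∀ (a : A) (x : AH A h), π (a • x) = a • π x)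
    (hπι : ∀ x ∈ K, π x = x) :
    -- for p > 0 every D₂-closed cochain is a D₂-coboundary …
    (∀ (p q : ℕ) (η : Raw A h (p + 1) (q + 1)), IsCochain A h K η →
      (∀ (xs : Fin q → AH A h) (φs : Fin (p + 2) → AH A h), (∀ l, φs l ∈ K) →
        D2 A h η xs φs = 0) →
      ∃ ρ : Raw A h p (q + 2), IsCochain A h K ρ ∧
        ∀ (xs : Fin (q + 1) → AH A h) (φs : Fin (p + 1) → AH A h), (∀ l, φs l ∈ K) →
          D2 A h ρ xs φs = η xs φs) ∧
    -- (the same in the edge case q = 0, where D₂-closedness is automatic) …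
    (∀ (p : ℕ) (η : Raw A h (p + 1) 0), IsCochain A h K η →
      ∃ ρ : Raw A h p 1, IsCochain A h K ρ ∧
        ∀ (xs : Fin 0 → AH A h) (φs : Fin (p + 1) → AH A h), (∀ l, φs l ∈ K) →
          D2 A h ρ xs φs = η xs φs) ∧
    -- … and in degree p = 0 the kernel of D₂ consists exactly of those cochains
    -- whose (extended) h-slots kill every argument from ι(K):
    (∀ (q : ℕ) (η : Raw A h 0 (q + 1)), IsCochain A h K η →
      ((∀ (xs : Fin q → AH A h) (φs : Fin 1 → AH A h), (∀ l, φs l ∈ K) →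
          D2 A h η xs φs = 0) ↔
        (∀ xs : Fin (q + 1) → AH A h, (∃ i, xs i ∈ K) →
          η xs (fun i => i.elim0) = 0))) := by
  let πA : AH A h →ₗ[A] AH A h := { toFun := π, map_add' := π.map_add, map_smul' := hπA }
  have hπ : LinearMap.IsProj K πA := ⟨hπK, hπι⟩
  exact ⟨fun p q η hη hcl => exists_D2_eq_of_D2_eq_zero hπ hη hcl,
    fun p η hη => exists_D2_eq_of_fin_zero hπ hη, fun q η hη => D2_eq_zero_iff hη⟩
end
end
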